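/- Let f satisfy −f'' + (t+α)² f = (1/b)(1 − f²) f on [0,∞) with 0 ≤ f ≤ 1, f'(0) = 0, and f(t) → 0 as t → ∞, where b > 1 and α ∈ ℝ. Then there exists a constant C > 0 such that f(t) ≤ C exp(−(t+α)²/2) for all t ≥ 0. -/

import Mathlib

/-!
The Gaussian `g t = exp (-(t + α) ^ 2 / 2)` solves `-g'' + (t + α) ^ 2 g = g`, and for `b ≥ 1`
the bounds `0 ≤ f ≤ 1` make `f` a subsolution of that equation. Hence `φ = f - C g` satisfies
`φ'' > 0` wherever `φ > 0` and `(t + α) ^ 2 ≥ 1`, so `φ` has no positive interior maximum there.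
Choosing `C` so large that `C g ≥ 1 ≥ f` on `[0, |α| + 1]`, and using `φ → 0` at infinity,
the maximum principle gives `φ ≤ 0` on the whole half-line.
-/

open Real Filter Set Topology

theorem IsLocalMax.deriv_deriv_nonpos {φ : ℝ → ℝ} {x₀ : ℝ} (hmax : IsLocalMax φ x₀)
    (hc : ContinuousAt φ x₀) : deriv (deriv φ) x₀ ≤ 0 := by
  by_contra! hpos
  have hmin : IsLocalMin φ x₀ := isLocalMin_of_deriv_deriv_pos hpos hmax.deriv_eq_zero hc
  have hconst : φ =ᶠ[𝓝 x₀] fun _ ↦ φ x₀ := by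
    filter_upwards [hmin, hmax] with x hge hle using le_antisymm hle hge
  have : deriv (deriv φ) x₀ = 0 := by
    rw [hconst.deriv.deriv_eq]
    simp
  exact hpos.ne' this

theorem nonpos_of_tendsto_zero_of_deriv_deriv_pos {φ : ℝ → ℝ} {T : ℝ}
    (hφ : ContinuousOn φ (Ici T)) (hT : φ T ≤ 0) (hlim : Tendsto φ atTop (𝓝 0))
    (hconv : ∀ x > T, 0 < φ x → 0 < deriv (deriv φ) x) : ∀ x ≥ T, φ x ≤ 0 := by
  by_contra! ⟨s, hsT, hs⟩
  have hsmall : ∀ᶠ x in cocompact ℝ ⊓ 𝓟 (Ici T), φ x ≤ φ s := by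
    rw [cocompact_eq_atBot_atTop, inf_sup_right, (disjoint_atBot_principal_Ici T).eq_bot,
      bot_sup_eq]
    exact (hlim.eventually (ge_mem_nhds hs)).filter_mono inf_le_left
  obtain ⟨t₀, ht₀T, hmax⟩ := hφ.exists_isMaxOn' isClosed_Ici hsT hsmall
  have ht₀pos : 0 < φ t₀ := hs.trans_le (hmax hsT)
  have ht₀T : T < t₀ := lt_of_le_of_ne ht₀T (by rintro rfl; linarith)
  have hnhds : Ici T ∈ 𝓝 t₀ := Ici_mem_nhds ht₀T
  exact (hconv t₀ ht₀T ht₀pos).not_ge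
    ((hmax.isLocalMax hnhds).deriv_deriv_nonpos (hφ.continuousAt hnhds))

noncomputable def shiftedGaussian (α t : ℝ) : ℝ := exp (-(t + α) ^ 2 / 2)

section shiftedGaussian

variable (α : ℝ)

theorem hasDerivAt_shiftedGaussian (t : ℝ) :
    HasDerivAt (shiftedGaussian α) (-(t + α) * shiftedGaussian α t) t := by
  have h := ((((hasDerivAt_id' t).add_const α).fun_pow 2).fun_neg.div_const 2).exp
  refine h.congr_deriv ?_
  rw [shiftedGaussian]
  norm_num
  ring

theorem contDiff_shiftedGaussian : ContDiff ℝ 2 (shiftedGaussian α) := by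
  unfold shiftedGaussian
  fun_prop

theorem deriv_shiftedGaussian :
    deriv (shiftedGaussian α) = fun t ↦ -(t + α) * shiftedGaussian α t :=
  funext fun t ↦ (hasDerivAt_shiftedGaussian α t).deriv

theorem deriv_deriv_shiftedGaussian (t : ℝ) :
    deriv (deriv (shiftedGaussian α)) t = ((t + α) ^ 2 - 1) * shiftedGaussian α t := by
  rw [deriv_shiftedGaussian]
  have h := (((hasDerivAt_id' t).add_const α).fun_neg).fun_mul (hasDerivAt_shiftedGaussian α t)
  rw [h.deriv]
  ring

theorem tendsto_shiftedGaussian_atTop : Tendsto (shiftedGaussian α) atTop (𝓝 0) := by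
  have hsq : Tendsto (fun t : ℝ ↦ (t + α) ^ 2) atTop atTop :=
    (tendsto_pow_atTop two_ne_zero).comp (tendsto_atTop_add_const_right _ α tendsto_id)
  exact tendsto_exp_atBot.comp ((tendsto_neg_atTop_atBot.comp hsq).atBot_div_const two_pos)

theorem one_le_exp_mul_shiftedGaussian {t R : ℝ} (hR : |t + α| ≤ R) :
    1 ≤ exp (R ^ 2 / 2) * shiftedGaussian α t := by
  rw [shiftedGaussian, ← exp_add]
  apply one_le_exp
  have := sq_le_sq' (abs_le.mp hR).1 (abs_le.mp hR).2
  linarith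

end shiftedGaussian

theorem deriv_deriv_sub_const_mul {f g : ℝ → ℝ} (hf : ContDiff ℝ 2 f) (hg : ContDiff ℝ 2 g)
    (C x : ℝ) :
    deriv (deriv fun t ↦ f t - C * g t) x = deriv (deriv f) x - C * deriv (deriv g) x := by
  have hderiv : deriv (fun t ↦ f t - C * g t) = fun t ↦ deriv f t - C * deriv g t :=
    funext fun t ↦ ((hf.differentiable two_ne_zero t).hasDerivAt.sub
      ((hg.differentiable two_ne_zero t).hasDerivAt.const_mul C)).deriv
  rw [hderiv]
  exact ((hf.differentiable_deriv_two x).hasDerivAt.sub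
    ((hg.differentiable_deriv_two x).hasDerivAt.const_mul C)).deriv

theorem deriv_deriv_sub_const_mul_shiftedGaussian_pos {f : ℝ → ℝ} {b α C x : ℝ}
    (hf : ContDiff ℝ 2 f) (hb : 1 ≤ b) (hx : 1 ≤ (x + α) ^ 2)
    (hode : -(deriv (deriv f) x) + (x + α) ^ 2 * f x = (1 / b) * (1 - f x ^ 2) * f x)
    (hf1 : f x ≤ 1) (hC : 0 ≤ C) (hlt : C * shiftedGaussian α x < f x) :
    0 < deriv (deriv fun t ↦ f t - C * shiftedGaussian α t) x := by
  rw [deriv_deriv_sub_const_mul hf (contDiff_shiftedGaussian α), deriv_deriv_shiftedGaussian]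
  have hf0 : 0 < f x := (mul_nonneg hC (exp_pos _).le).trans_lt hlt
  have hb' : 0 ≤ 1 - 1 / b := sub_nonneg.mpr ((div_le_one (by linarith)).mpr hb)
  have hreact : 0 ≤ (1 - f x ^ 2) * f x := mul_nonneg (by nlinarith) hf0.le
  calc 0 < ((x + α) ^ 2 - 1) * (f x - C * shiftedGaussian α x)
          + (1 - 1 / b) * ((1 - f x ^ 2) * f x) + f x ^ 3 :=
        add_pos_of_nonneg_of_pos (add_nonneg (mul_nonneg (by linarith) (by linarith))
          (mul_nonneg hb' hreact)) (pow_pos hf0 3)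
    _ = _ := by linear_combination hode

theorem gaussian_decay (b α : ℝ) (hb : 1 < b) (f : ℝ → ℝ)
    (hreg : ContDiff ℝ 2 f)
    (hode : ∀ t ≥ (0:ℝ),
      -(deriv (deriv f) t) + (t + α) ^ 2 * f t = (1 / b) * (1 - f t ^ 2) * f t)
    (hbounds : ∀ t ≥ (0:ℝ), 0 ≤ f t ∧ f t ≤ 1)
    (hlim : Filter.Tendsto f Filter.atTop (nhds 0)) :
    ∃ C > 0, ∀ t ≥ (0:ℝ), f t ≤ C * Real.exp (-(t + α) ^ 2 / 2) := by
  set T := |α| + 1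
  set C := exp ((T + |α|) ^ 2 / 2)
  have hα := abs_le.mp (le_refl |α|)
  have hnear : ∀ t ∈ Icc 0 T, f t ≤ C * shiftedGaussian α t := fun t ht ↦
    (hbounds t ht.1).2.trans <| one_le_exp_mul_shiftedGaussian α <|
      abs_le.mpr ⟨by linarith [ht.1], by linarith [ht.2]⟩
  have hfar : ∀ t ≥ T, f t - C * shiftedGaussian α t ≤ 0 := by
    refine nonpos_of_tendsto_zero_of_deriv_deriv_pos ?_ ?_ ?_ fun x hx hpos ↦ ?_
    · exact (hreg.continuous.sub
        (continuous_const.mul (contDiff_shiftedGaussian α).continuous)).continuousOn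
    · linarith [hnear T ⟨by positivity, le_rfl⟩]
    · simpa using hlim.sub ((tendsto_shiftedGaussian_atTop α).const_mul C)
    · have hx0 : 0 ≤ x := by linarith [abs_nonneg α]
      exact deriv_deriv_sub_const_mul_shiftedGaussian_pos hreg hb.le
        (one_le_pow₀ (by linarith)) (hode x hx0) (hbounds x hx0).2 (exp_pos _).le
        (sub_pos.mp hpos)
  refine ⟨C, exp_pos _, fun t ht ↦ ?_⟩
  rcases le_or_gt t T with h | h
  · exact hnear t ⟨ht, h⟩
  · exact sub_nonpos.mp (hfar t h.le)
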